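/- For all N ≥ 2, all k ∈ {1,…,N−1}, all p ∈ (1/2,1) and every x ∈ {0,…,N}, the boundary-value function a_{N,k} equals the equilibrium exponential moment of the height function: a_{N,k}(x) = E_{π_{N,k}}[λ^{h(ξ)(x)/2}]. -/

import Mathlib

open Filter
open scoped Classical BigOperators Topology

namespace Wasep

/-- Particle configurations on a segment of length `N`
(site `x` of the paper, `x ∈ {1,…,N}`, is index `x-1 : Fin N`). -/
abbrev Conf (N : ℕ) := Fin N → Bool

/-- Number of particles of a configuration. -/
def numParticles {N : ℕ} (ξ : Conf N) : ℕ :=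
  (Finset.univ.filter fun x => ξ x = true).card

/-- The left site of the bond `y` (the paper's site `y`, for `y ∈ {1,…,N-1}`). -/
def siteA {N : ℕ} (y : Fin (N - 1)) : Fin N := ⟨y.1, by have := y.isLt; omega⟩

/-- The right site of the bond `y` (the paper's site `y+1`, for `y ∈ {1,…,N-1}`). -/
def siteB {N : ℕ} (y : Fin (N - 1)) : Fin N := ⟨y.1 + 1, by have := y.isLt; omega⟩

/-- Jump rate of the bond `y` in configuration `ξ`:
`q·1_{ξ(y)<ξ(y+1)} + p·1_{ξ(y)>ξ(y+1)}` with `q = 1-p`. -/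
noncomputable def rate {N : ℕ} (p : ℝ) (ξ : Conf N) (y : Fin (N - 1)) : ℝ :=
  (if ξ (siteA y) = false ∧ ξ (siteB y) = true then 1 - p else 0) +
    (if ξ (siteA y) = true ∧ ξ (siteB y) = false then p else 0)

/-- The configuration `ξ^y`, with the contents of sites `y` and `y+1` swapped. -/
def swapBond {N : ℕ} (ξ : Conf N) (y : Fin (N - 1)) : Conf N :=
  ξ ∘ Equiv.swap (siteA y) (siteB y)

/-- The ASEP generator acting on functions:
`(L f)(ξ) = Σ_{y=1}^{N-1} (q·1_{ξ(y)<ξ(y+1)} + p·1_{ξ(y)>ξ(y+1)})(f(ξ^y) − f(ξ))`. -/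
noncomputable def gen (N : ℕ) (p : ℝ) (f : Conf N → ℝ) (ξ : Conf N) : ℝ :=
  ∑ y : Fin (N - 1), rate p ξ y * (f (swapBond ξ y) - f ξ)

/-- The ASEP generator, as a matrix:  `(L f)(ξ) = Σ_{ξ'} genM(ξ,ξ') f(ξ')`. -/
noncomputable def genM (N : ℕ) (p : ℝ) : Matrix (Conf N) (Conf N) ℝ := fun ξ ξ' =>
  ∑ y : Fin (N - 1),
    rate p ξ y * ((if ξ' = swapBond ξ y then (1 : ℝ) else 0) - (if ξ' = ξ then (1 : ℝ) else 0))

/-- The semigroup `P_t = exp (t L)`; `Pt N p t ξ ξ'` is the transition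
probability from `ξ` to `ξ'` in time `t`. -/
noncomputable def Pt (N : ℕ) (p t : ℝ) (ξ ξ' : Conf N) : ℝ :=
  (NormedSpace.exp (t • LinearMap.toContinuousLinearMap (Matrix.toLin' (genM N p))))
    (fun η => if η = ξ' then (1 : ℝ) else 0) ξ

/-- `λ = p / q`. -/
noncomputable def lam (p : ℝ) : ℝ := p / (1 - p)

/-- The bias `b = p - q`. -/
def bias (p : ℝ) : ℝ := p - (1 - p)

/-- The increasing list of (1-based) particle positions `ξ_1 < ξ_2 < … < ξ_k`. -/
def particlePos {N : ℕ} (ξ : Conf N) : List ℕ :=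
  ((Finset.univ.filter fun x => ξ x = true).sort (· ≤ ·)).map fun x => (x : ℕ) + 1

/-- `A(ξ) = Σ_{i=1}^k (N − k + i − ξ_i)`. -/
def Astat (N k : ℕ) {M : ℕ} (ξ : Conf M) : ℤ :=
  ∑ i ∈ Finset.range k, ((N : ℤ) - k + (i + 1) - ((particlePos ξ).getD i 0 : ℤ))

/-- The partition function `Z_{N,k} = Σ_{ξ ∈ Ω⁰_{N,k}} λ^{−A(ξ)}`. -/
noncomputable def Zpart (N k : ℕ) (p : ℝ) : ℝ :=
  ∑ ξ ∈ Finset.univ.filter (fun ξ : Conf N => numParticles ξ = k), lam p ^ (-Astat N k ξ)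

/-- The invariant measure `π_{N,k}(ξ) = λ^{−A(ξ)}/Z_{N,k}`,
extended by `0` outside of the `k`-particle sector. -/
noncomputable def statMeas (N k : ℕ) (p : ℝ) (ξ : Conf N) : ℝ :=
  if numParticles ξ = k then lam p ^ (-Astat N k ξ) / Zpart N k p else 0

/-- Total variation distance `‖μ − ν‖_TV = sup_A (μ(A) − ν(A))` on a finite space. -/
noncomputable def tvDist {S : Type*} [Fintype S] (μ ν : S → ℝ) : ℝ :=
  ⨆ A : Finset S, (∑ x ∈ A, μ x - ∑ x ∈ A, ν x)

/-- `d^{N,k}(t) = max_{ξ ∈ Ω⁰_{N,k}} ‖P_t(ξ,·) − π_{N,k}‖_TV`. -/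
noncomputable def distEq (N k : ℕ) (p t : ℝ) : ℝ :=
  ⨆ ξ : {ξ : Conf N // numParticles ξ = k},
    tvDist (fun ξ' => Pt N p t ξ.1 ξ') (statMeas N k p)

/-- `T^{N,k}_mix(ε) = inf {t ≥ 0 : d^{N,k}(t) ≤ ε}`. -/
noncomputable def Tmix (N k : ℕ) (p ε : ℝ) : ℝ :=
  sInf {t : ℝ | 0 ≤ t ∧ distEq N k p t ≤ ε}

/-- The height function `h(ξ)(x) = Σ_{y=1}^x (2ξ(y) − 1)`, for `x ∈ {0,…,N}`. -/
def height {N : ℕ} (ξ : Conf N) (x : ℕ) : ℤ :=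
  ∑ y ∈ Finset.univ.filter (fun y : Fin N => (y : ℕ) < x), (if ξ y then (1 : ℤ) else -1)

/-- Pointwise order on height functions. -/
def heightLE {N : ℕ} (ξ ξ' : Conf N) : Prop := ∀ x ≤ N, height ξ x ≤ height ξ' x

/-- `ϱ = (√p − √q)²`. -/
noncomputable def rho (p : ℝ) : ℝ := (Real.sqrt p - Real.sqrt (1 - p)) ^ 2

/-- The spectral gap `gap_N = (√p − √q)² + 4√(pq)·sin²(π/(2N))`. -/
noncomputable def gapN (N : ℕ) (p : ℝ) : ℝ :=
  rho p + 4 * Real.sqrt (p * (1 - p)) * Real.sin (Real.pi / (2 * N)) ^ 2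

/-- `a` solves the boundary value problem `√(pq)·Δa(x) = ϱ·a(x)` on `{1,…,N−1}`
with `a(0) = 1` and `a(N) = λ^{(2k−N)/2}`, defining `a_{N,k}`. -/
def IsBVP (N k : ℕ) (p : ℝ) (a : ℕ → ℝ) : Prop :=
  a 0 = 1 ∧ a N = lam p ^ ((2 * (k : ℝ) - N) / 2) ∧
    ∀ x : ℕ, 1 ≤ x → x ≤ N - 1 →
      Real.sqrt (p * (1 - p)) * (a (x + 1) + a (x - 1) - 2 * a x) = rho p * a x

/-- `f^{(j)}_{N,k}(ζ) = Σ_{x=1}^{N-1} sin(jπx/N)·(λ^{ζ(x)/2} − a_{N,k}(x))/(λ−1)`,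
viewed as a function of the particle configuration via the height function. -/
noncomputable def eigenF (N : ℕ) (p : ℝ) (a : ℕ → ℝ) (j : ℕ) (ξ : Conf N) : ℝ :=
  ∑ x ∈ Finset.Icc 1 (N - 1),
    Real.sin ((j : ℝ) * Real.pi * x / N) *
      ((lam p ^ ((height ξ x : ℝ) / 2) - a x) / (lam p - 1))

/-- `f^{(0)}_{N,k}(ζ) = Σ_{x=1}^{N-1} (λ^{ζ(x)/2} − a_{N,k}(x))/(λ−1)`. -/
noncomputable def fZero (N : ℕ) (p : ℝ) (a : ℕ → ℝ) (ξ : Conf N) : ℝ :=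
  ∑ x ∈ Finset.Icc 1 (N - 1), (lam p ^ ((height ξ x : ℝ) / 2) - a x) / (lam p - 1)

/-- The maximal configuration `ξ^max` (particles on sites `1,…,k`);
its height function is `∧`. -/
def confMax (N k : ℕ) : Conf N := fun x => decide ((x : ℕ) < k)

/-- The minimal configuration `ξ^min` (particles on sites `N−k+1,…,N`);
its height function is `∨`. -/
def confMin (N k : ℕ) : Conf N := fun x => decide (N - k ≤ (x : ℕ))

/-- `π_{N,k}(ξ(x) = 1)` for the (0-based) site `x : Fin N`. -/
noncomputable def occProb (N k : ℕ) (p : ℝ) (x : Fin N) : ℝ :=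
  ∑ ξ ∈ Finset.univ.filter (fun ξ : Conf N => ξ x = true), statMeas N k p ξ

/-- `ℓ_N(ξ) = min {x ∈ {1,…,N} : ξ(x) = 1}`, the position of the leftmost particle. -/
noncomputable def leftPos {N : ℕ} (ξ : Conf N) : ℕ :=
  sInf {x | ∃ y : Fin N, ξ y = true ∧ x = (y : ℕ) + 1}

/-- `r_N(ξ) = max {x ∈ {1,…,N} : ξ(x) = 0}`, the position of the rightmost empty site. -/
noncomputable def rightEmpty {N : ℕ} (ξ : Conf N) : ℕ :=
  sSup {x | ∃ y : Fin N, ξ y = false ∧ x = (y : ℕ) + 1}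

/-- `Q₁(ξ)`: maximal length of a run of consecutive empty sites. -/
noncomputable def runEmpty {N : ℕ} (ξ : Conf N) : ℕ :=
  sSup {n | 1 ≤ n ∧ ∃ i, i + n ≤ N ∧
    ∀ y : Fin N, i ≤ (y : ℕ) → (y : ℕ) < i + n → ξ y = false}

/-- `Q₂(ξ)`: maximal length of a run of consecutive occupied sites. -/
noncomputable def runFull {N : ℕ} (ξ : Conf N) : ℕ :=
  sSup {n | 1 ≤ n ∧ ∃ i, i + n ≤ N ∧
    ∀ y : Fin N, i ≤ (y : ℕ) → (y : ℕ) < i + n → ξ y = true}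

/-- `Q(ξ) = max(Q₁(ξ), Q₂(ξ))`. -/
noncomputable def Qmax {N : ℕ} (ξ : Conf N) : ℕ := max (runEmpty ξ) (runFull ξ)

/-- `L_N(ζ) = max{x : ζ(x) = −x}` for a height function `ζ`. -/
noncomputable def LNh {N : ℕ} (ξ : Conf N) : ℕ :=
  sSup {x | x ≤ N ∧ height ξ x = -(x : ℤ)}

/-- `R_N(ζ) = min{x : ζ(x) = x − 2(N−k)}` for a height function `ζ`. -/
noncomputable def RNh (k : ℕ) {N : ℕ} (ξ : Conf N) : ℕ :=
  sInf {x | x ≤ N ∧ height ξ x = (x : ℤ) - 2 * ((N : ℤ) - k)}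

/-- `D_N(ζ) = max(|L_N(ζ) − (N−k)|, |R_N(ζ) − (N−k)|)`. -/
noncomputable def DNh (k : ℕ) {N : ℕ} (ξ : Conf N) : ℤ :=
  max |(LNh ξ : ℤ) - ((N : ℤ) - k)| |(RNh k ξ : ℤ) - ((N : ℤ) - k)|

/-- `H_ζ(x) = λ^{(N−k)/2}·(λ^{ζ(x)/2} − a_{N,k}(x))/(λ−1)`. -/
noncomputable def Hfun (N k : ℕ) (p : ℝ) (a : ℕ → ℝ) (ξ : Conf N) (x : ℕ) : ℝ :=
  lam p ^ (((N : ℝ) - k) / 2) * ((lam p ^ ((height ξ x : ℝ) / 2) - a x) / (lam p - 1))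

/-- Variance of `f` under the (probability vector) `μ`. -/
noncomputable def varOf {S : Type*} [Fintype S] (μ f : S → ℝ) : ℝ :=
  (∑ x, μ x * f x ^ 2) - (∑ x, μ x * f x) ^ 2

/-- Total variation distance between the pushforwards of `μ` and `ν` by `g`. -/
noncomputable def tvPush {S : Type*} [Fintype S] (μ ν : S → ℝ) (g : S → ℕ) : ℝ :=
  ⨆ A : Set ℕ,
    ((∑ x ∈ Finset.univ.filter (fun x => g x ∈ A), μ x) -
      ∑ x ∈ Finset.univ.filter (fun x => g x ∈ A), ν x)

/-- The scaling limit `ℓ_α(t)` of the (rescaled) position of the leftmost particle. -/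
noncomputable def ellAlpha (α t : ℝ) : ℝ :=
  if t ≤ α then 0
  else if (Real.sqrt α + Real.sqrt (1 - α)) ^ 2 ≤ t then 1 - α
  else (Real.sqrt t - Real.sqrt α) ^ 2

/-- The scaling limit `r_α(t)` of the (rescaled) position of the rightmost empty site. -/
noncomputable def rAlpha (α t : ℝ) : ℝ :=
  if t ≤ 1 - α then 1
  else if (Real.sqrt α + Real.sqrt (1 - α)) ^ 2 ≤ t then 1 - α
  else 1 - (Real.sqrt t - Real.sqrt (1 - α)) ^ 2

end Wasep

/-!
Write `M(x) = E_π[λ^{h(ξ)(x)/2}]`. At an interior site `x` the height moves by `±1` on either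
side, and `√(pq)·λ^{1/2} = p`, `√(pq)·λ^{-1/2} = q`; hence, configuration by configuration,
`√(pq)·Δλ^{h/2}(x) = ϱ·λ^{h(x)/2} + (p − q)·λ^{h(x)/2}·(ξ(x+1) − ξ(x))`.
The last term has mean zero under `π`: exchanging the contents of sites `x` and `x+1` when
`ξ(x) = 1, ξ(x+1) = 0` lowers `A` by one and `h(x)` by two, so `π(ξ)·λ^{h(ξ)(x)/2}` is
unchanged while `ξ(x+1) − ξ(x)` changes sign. So `M` solves the boundary value problem
(`M(0) = 1`, and `h(N) = 2k − N` on the `k`-particle sector), whose solution is unique by the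
maximum principle, as `ϱ ≥ 0`.
-/

namespace Wasep

section

variable {N k : ℕ} {p : ℝ}

lemma lam_pos (hp₀ : 0 < p) (hp₁ : p < 1) : 0 < lam p :=
  div_pos hp₀ (sub_pos.2 hp₁)

lemma rho_eq (hp₀ : 0 ≤ p) (hp₁ : p ≤ 1) : rho p = 1 - 2 * Real.sqrt (p * (1 - p)) := by
  rw [rho, Real.sqrt_mul hp₀]
  linear_combination Real.sq_sqrt hp₀ + Real.sq_sqrt (sub_nonneg.2 hp₁)

lemma sqrt_mul_lam_rpow_half (hp₀ : 0 < p) (hp₁ : p < 1) :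
    Real.sqrt (p * (1 - p)) * lam p ^ (1 / 2 : ℝ) = p := by
  have hq : 1 - p ≠ 0 := (sub_pos.2 hp₁).ne'
  rw [← Real.sqrt_eq_rpow, ← Real.sqrt_mul (by nlinarith),
    show p * (1 - p) * lam p = p ^ 2 by rw [lam]; field_simp, Real.sqrt_sq hp₀.le]

lemma sqrt_mul_lam_rpow_neg_half (hp₀ : 0 < p) (hp₁ : p < 1) :
    Real.sqrt (p * (1 - p)) * lam p ^ (-(1 / 2) : ℝ) = 1 - p := by
  rw [Real.rpow_neg (lam_pos hp₀ hp₁).le, ← Real.sqrt_eq_rpow, ← Real.sqrt_inv,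
    ← Real.sqrt_mul (by nlinarith),
    show p * (1 - p) * (lam p)⁻¹ = (1 - p) ^ 2 by rw [lam, inv_div]; field_simp,
    Real.sqrt_sq (sub_pos.2 hp₁).le]

lemma le_increment_of_laplacian_eq {s r : ℝ} (hs : 0 < s) (hr : 0 ≤ r) {d : ℕ → ℝ}
    (h₀ : d 0 = 0)
    (hrec : ∀ x, 1 ≤ x → x ≤ N - 1 → s * (d (x + 1) + d (x - 1) - 2 * d x) = r * d x)
    (h₁ : 0 ≤ d 1) : ∀ m, m + 1 ≤ N → d 1 ≤ d (m + 1) - d m ∧ d 1 ≤ d (m + 1) := by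
  intro m
  induction m with
  | zero => intro; simp [h₀]
  | succ m ih =>
    intro hm
    obtain ⟨hinc, hval⟩ := ih (by omega)
    have hconvex : 0 ≤ d (m + 1 + 1) + d m - 2 * d (m + 1) := by
      have hm := hrec (m + 1) (by omega) (by omega)
      rw [Nat.add_sub_cancel] at hm
      refine nonneg_of_mul_nonneg_right ?_ hs
      rw [hm]
      exact mul_nonneg hr (h₁.trans hval)
    constructor <;> linarith

-- Maximum principle: if `0 ≤ d 1`, the increments of `d` stay `≥ d 1`, so `d N = 0` forces
-- `d 1 = 0`; the same holds for `-d`, and the recurrence then propagates `d = 0`.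
lemma eq_zero_of_laplacian_eq {s r : ℝ} (hs : 0 < s) (hr : 0 ≤ r) {d : ℕ → ℝ}
    (h₀ : d 0 = 0) (hN : d N = 0)
    (hrec : ∀ x, 1 ≤ x → x ≤ N - 1 → s * (d (x + 1) + d (x - 1) - 2 * d x) = r * d x) :
    ∀ x ≤ N, d x = 0 := by
  obtain _ | M := N
  · intro x hx
    rwa [Nat.le_zero.1 hx]
  have hle : ∀ e : ℕ → ℝ, e 0 = 0 → e (M + 1) = 0 →
      (∀ x, 1 ≤ x → x ≤ M + 1 - 1 → s * (e (x + 1) + e (x - 1) - 2 * e x) = r * e x) →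
      0 ≤ e 1 → e 1 ≤ 0 := fun e he₀ heN herec he₁ =>
    heN ▸ (le_increment_of_laplacian_eq hs hr he₀ herec he₁ M le_rfl).2
  have hd₁ : d 1 = 0 := by
    rcases le_total 0 (d 1) with h | h
    · exact le_antisymm (hle d h₀ hN hrec h) h
    · have := hle (fun x => -d x) (by simp [h₀]) (by simp [hN])
        (fun x hx₁ hx₂ => by linear_combination -hrec x hx₁ hx₂) (by simpa using h)
      linarith
  have hpair : ∀ m, m + 1 ≤ M + 1 → d m = 0 ∧ d (m + 1) = 0 := by
    intro m
    induction m with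
    | zero => intro; exact ⟨h₀, hd₁⟩
    | succ m ih =>
      intro hm
      obtain ⟨hm₀, hm₁⟩ := ih (by omega)
      refine ⟨hm₁, ?_⟩
      have hm := hrec (m + 1) (by omega) (by omega)
      rw [Nat.add_sub_cancel, hm₀, hm₁] at hm
      simpa [hs.ne'] using hm
  rintro (_ | m) hx
  · exact h₀
  · exact (hpair m hx).2

@[simp]
lemma val_siteA (y : Fin (N - 1)) : (siteA y : ℕ) = y := rfl

@[simp]
lemma val_siteB (y : Fin (N - 1)) : (siteB y : ℕ) = y + 1 := rfl

@[simp]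
lemma swapBond_apply_siteA (ξ : Conf N) (y : Fin (N - 1)) :
    swapBond ξ y (siteA y) = ξ (siteB y) := by
  simp [swapBond]

@[simp]
lemma swapBond_apply_siteB (ξ : Conf N) (y : Fin (N - 1)) :
    swapBond ξ y (siteB y) = ξ (siteA y) := by
  simp [swapBond]

lemma swapBond_swapBond (ξ : Conf N) (y : Fin (N - 1)) : swapBond (swapBond ξ y) y = ξ := by
  funext x
  simp [swapBond]

lemma swapBond_involutive (y : Fin (N - 1)) :
    Function.Involutive (swapBond · y : Conf N → Conf N) :=
  fun ξ => swapBond_swapBond ξ y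

lemma height_zero (ξ : Conf N) : height ξ 0 = 0 := by
  simp [height]

lemma height_succ (ξ : Conf N) (i : Fin N) :
    height ξ (i + 1) = height ξ i + if ξ i then 1 else -1 := by
  have hlt : (Finset.univ.filter fun y : Fin N => (y : ℕ) < i + 1) =
      insert i (Finset.univ.filter fun y : Fin N => (y : ℕ) < i) := by
    ext y
    simp only [Finset.mem_insert, Finset.mem_filter, Finset.mem_univ, true_and, Fin.ext_iff]
    omega
  rw [height, hlt, Finset.sum_insert (by simp), add_comm]
  rfl

lemma height_last (ξ : Conf N) : height ξ N = 2 * numParticles ξ - N := by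
  have hspin : ∀ b : Bool, (if b then (1 : ℤ) else -1) = 2 * (if b then 1 else 0) - 1 := by
    decide
  simp only [height, numParticles, Fin.is_lt, Finset.filter_true, hspin, Finset.sum_sub_distrib,
    ← Finset.mul_sum, Finset.sum_boole, Finset.card_univ, Fintype.card_fin, Finset.sum_const,
    nsmul_eq_mul, mul_one]

lemma height_swapBond_succ (ξ : Conf N) (y : Fin (N - 1))
    (hA : ξ (siteA y) = true) (hB : ξ (siteB y) = false) :
    height (swapBond ξ y) (y + 1) = height ξ (y + 1) - 2 := by
  have hbelow : height (swapBond ξ y) y = height ξ y := by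
    refine Finset.sum_congr rfl fun i hi => ?_
    have hi : (i : ℕ) < y := (Finset.mem_filter.1 hi).2
    rw [swapBond, Function.comp_apply, Equiv.swap_apply_of_ne_of_ne]
    · exact fun h => by simp [h, siteA] at hi
    · exact fun h => by simp [h, siteB] at hi
  have hswapA : swapBond ξ y (siteA y) = false := by
    rw [swapBond, Function.comp_apply, Equiv.swap_apply_left, hB]
  have hsucc := height_succ (swapBond ξ y) (siteA y)
  have hsuccξ := height_succ ξ (siteA y)
  rw [hswapA] at hsucc
  rw [hA] at hsuccξ
  simp only [val_siteA, Bool.false_eq_true, if_true, if_false] at hsucc hsuccξ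
  omega

lemma sum_range_length_getD (l : List ℕ) :
    ∑ i ∈ Finset.range l.length, (l.getD i 0 : ℤ) = l.sum := by
  induction l with
  | nil => simp
  | cons a t ih =>
    rw [List.length_cons, Finset.sum_range_succ']
    simp only [List.getD_cons_succ, List.getD_cons_zero, List.sum_cons, ih]
    push_cast
    ring

-- The coercion `Fin N → ℕ` inside `particlePos` is elaborated through the list monad.
lemma particlePos_eq_map (ξ : Conf N) :
    particlePos ξ = ((Finset.univ.filter fun x => ξ x = true).sort (· ≤ ·)).map
      fun x : Fin N => (x : ℕ) + 1 := by
  simp [particlePos, ← List.map_eq_flatMap]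

lemma length_particlePos (ξ : Conf N) : (particlePos ξ).length = numParticles ξ := by
  rw [particlePos_eq_map, List.length_map, Finset.length_sort, numParticles]

def posSum (ξ : Conf N) : ℤ :=
  ∑ y ∈ Finset.univ.filter (fun y => ξ y = true), ((y : ℤ) + 1)

lemma sum_particlePos (ξ : Conf N) : ((particlePos ξ).sum : ℤ) = posSum ξ := by
  rw [particlePos_eq_map, ((Finset.sort_perm_toList _ _).map _).sum_eq, Finset.sum_map_toList,
    posSum]
  push_cast
  rfl

lemma Astat_eq_sub_posSum {ξ : Conf N} (hξ : numParticles ξ = k) :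
    Astat N k ξ = (∑ i ∈ Finset.range k, ((N : ℤ) - k + (i + 1))) - posSum ξ := by
  rw [Astat, Finset.sum_sub_distrib, ← hξ, ← length_particlePos, sum_range_length_getD,
    sum_particlePos]

lemma numParticles_swapBond (ξ : Conf N) (y : Fin (N - 1)) :
    numParticles (swapBond ξ y) = numParticles ξ := by
  simp only [numParticles, Finset.card_filter]
  exact Equiv.sum_comp (Equiv.swap (siteA y) (siteB y)) fun x => if ξ x = true then 1 else 0

lemma posSum_swapBond {ξ : Conf N} {y : Fin (N - 1)}
    (hA : ξ (siteA y) = true) (hB : ξ (siteB y) = false) :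
    posSum (swapBond ξ y) = posSum ξ + 1 := by
  set σ := Equiv.swap (siteA y) (siteB y)
  have hshift : ∀ z, (if ξ z = true then ((σ z : ℤ) + 1) else 0) =
      (if ξ z = true then ((z : ℤ) + 1) else 0) + if z = siteA y then 1 else 0 := by
    intro z
    by_cases hzA : z = siteA y
    · subst hzA
      simp only [σ, Equiv.swap_apply_left, hA, if_true, val_siteA, val_siteB]
      push_cast
      ring
    by_cases hzB : z = siteB y
    · subst hzB
      simp [hB, hzA]
    · simp [σ, Equiv.swap_apply_of_ne_of_ne hzA hzB, hzA]
  calc posSum (swapBond ξ y)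
      = ∑ z, if ξ (σ z) = true then (z : ℤ) + 1 else 0 := by
        rw [posSum, Finset.sum_filter]
        rfl
    _ = ∑ z, if ξ z = true then (σ z : ℤ) + 1 else 0 := by
        rw [← Equiv.sum_comp σ]
        simp [σ]
    _ = posSum ξ + 1 := by
        rw [Finset.sum_congr rfl fun z _ => hshift z, Finset.sum_add_distrib,
          Finset.sum_ite_eq', posSum, Finset.sum_filter]
        simp

lemma Astat_swapBond {ξ : Conf N} {y : Fin (N - 1)} (hξ : numParticles ξ = k)
    (hA : ξ (siteA y) = true) (hB : ξ (siteB y) = false) :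
    Astat N k (swapBond ξ y) = Astat N k ξ - 1 := by
  rw [Astat_eq_sub_posSum ((numParticles_swapBond ξ y).trans hξ), Astat_eq_sub_posSum hξ,
    posSum_swapBond hA hB]
  ring

lemma statMeas_swapBond (hlam : lam p ≠ 0) {ξ : Conf N} {y : Fin (N - 1)}
    (hA : ξ (siteA y) = true) (hB : ξ (siteB y) = false) :
    statMeas N k p (swapBond ξ y) = lam p * statMeas N k p ξ := by
  unfold statMeas
  rw [numParticles_swapBond]
  split_ifs with hξ
  · rw [Astat_swapBond hξ hA hB, neg_sub, sub_eq_neg_add, zpow_add₀ hlam, zpow_one]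
    ring
  · rw [mul_zero]

lemma numParticles_confMax (hk : k ≤ N) : numParticles (confMax N k) = k := by
  simp [numParticles, confMax, Fin.card_filter_val_lt, hk]

lemma Zpart_pos (hlam : 0 < lam p) (hk : k ≤ N) : 0 < Zpart N k p :=
  Finset.sum_pos (fun _ _ => zpow_pos hlam _)
    ⟨confMax N k, by simp [numParticles_confMax hk]⟩

lemma sum_statMeas (hlam : 0 < lam p) (hk : k ≤ N) : ∑ ξ : Conf N, statMeas N k p ξ = 1 := by
  rw [← div_self (Zpart_pos hlam hk).ne', Zpart, Finset.sum_div, Finset.sum_filter]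
  rfl

noncomputable def heightMoment (N k : ℕ) (p : ℝ) (x : ℕ) : ℝ :=
  ∑ ξ : Conf N, statMeas N k p ξ * lam p ^ ((height ξ x : ℝ) / 2)

lemma lam_rpow_half_int_add (hlam : 0 < lam p) (h m : ℤ) :
    lam p ^ (((h + m : ℤ) : ℝ) / 2) = lam p ^ ((h : ℝ) / 2) * lam p ^ ((m : ℝ) / 2) := by
  rw [← Real.rpow_add hlam]
  push_cast
  ring_nf

lemma sqrt_mul_lam_rpow_spin (hp₀ : 0 < p) (hp₁ : p < 1) (b : Bool) :
    Real.sqrt (p * (1 - p)) * lam p ^ (((if b then 1 else -1 : ℤ) : ℝ) / 2) =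
      1 - p + bias p * if b then 1 else 0 := by
  cases b <;>
    norm_num [sqrt_mul_lam_rpow_half hp₀ hp₁, sqrt_mul_lam_rpow_neg_half hp₀ hp₁, bias]

lemma sqrt_mul_lam_rpow_neg_spin (hp₀ : 0 < p) (hp₁ : p < 1) (b : Bool) :
    Real.sqrt (p * (1 - p)) * lam p ^ (((-(if b then 1 else -1) : ℤ) : ℝ) / 2) =
      p - bias p * if b then 1 else 0 := by
  cases b <;>
    norm_num [sqrt_mul_lam_rpow_half hp₀ hp₁, sqrt_mul_lam_rpow_neg_half hp₀ hp₁, bias]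

lemma sqrt_mul_laplacian_lam_rpow_height (hp₀ : 0 < p) (hp₁ : p < 1) (ξ : Conf N)
    (y : Fin (N - 1)) :
    Real.sqrt (p * (1 - p)) * (lam p ^ ((height ξ (y + 1 + 1) : ℝ) / 2) +
        lam p ^ ((height ξ y : ℝ) / 2) - 2 * lam p ^ ((height ξ (y + 1) : ℝ) / 2)) =
      rho p * lam p ^ ((height ξ (y + 1) : ℝ) / 2) +
        bias p * (lam p ^ ((height ξ (y + 1) : ℝ) / 2) *
          ((if ξ (siteB y) then 1 else 0) - if ξ (siteA y) then 1 else 0)) := by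
  have hlam := lam_pos hp₀ hp₁
  have hright : height ξ (y + 1 + 1) = height ξ (y + 1) + if ξ (siteB y) then 1 else -1 :=
    height_succ ξ (siteB y)
  have hleft : height ξ y = height ξ (y + 1) + -(if ξ (siteA y) then 1 else -1) := by
    have hsucc := height_succ ξ (siteA y)
    rw [val_siteA] at hsucc
    omega
  rw [hright, hleft, lam_rpow_half_int_add hlam, lam_rpow_half_int_add hlam,
    rho_eq hp₀.le hp₁.le]
  linear_combination lam p ^ ((height ξ (y + 1) : ℝ) / 2) *
    (sqrt_mul_lam_rpow_spin hp₀ hp₁ (ξ (siteB y)) +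
      sqrt_mul_lam_rpow_neg_spin hp₀ hp₁ (ξ (siteA y)))

lemma statMeas_mul_lam_rpow_height_swapBond (hlam : 0 < lam p) {ξ : Conf N} {y : Fin (N - 1)}
    (hne : ξ (siteA y) ≠ ξ (siteB y)) :
    statMeas N k p (swapBond ξ y) * lam p ^ ((height (swapBond ξ y) (y + 1) : ℝ) / 2) =
      statMeas N k p ξ * lam p ^ ((height ξ (y + 1) : ℝ) / 2) := by
  have hmove : ∀ η : Conf N, η (siteA y) = true → η (siteB y) = false →
      statMeas N k p (swapBond η y) * lam p ^ ((height (swapBond η y) (y + 1) : ℝ) / 2) =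
        statMeas N k p η * lam p ^ ((height η (y + 1) : ℝ) / 2) := by
    intro η hA hB
    rw [statMeas_swapBond hlam.ne' hA hB, height_swapBond_succ η y hA hB, sub_eq_add_neg,
      lam_rpow_half_int_add hlam]
    norm_num [Real.rpow_neg_one, hlam.ne']
    field_simp
  cases hA : ξ (siteA y) <;> cases hB : ξ (siteB y)
  · exact absurd (hA.trans hB.symm) hne
  · have h := hmove (swapBond ξ y) (by simp [hB]) (by simp [hA])
    rw [swapBond_swapBond] at h
    exact h.symm
  · exact hmove ξ hA hB
  · exact absurd (hA.trans hB.symm) hne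

lemma sum_statMeas_mul_lam_rpow_height_mul_current (hlam : 0 < lam p) (y : Fin (N - 1)) :
    ∑ ξ : Conf N, statMeas N k p ξ * lam p ^ ((height ξ (y + 1) : ℝ) / 2) *
      ((if ξ (siteB y) then 1 else 0) - if ξ (siteA y) then 1 else 0) = 0 := by
  set f : Conf N → ℝ := fun ξ => statMeas N k p ξ * lam p ^ ((height ξ (y + 1) : ℝ) / 2) *
      ((if ξ (siteB y) then 1 else 0) - if ξ (siteA y) then 1 else 0)
  have hodd : ∀ ξ, f (swapBond ξ y) = -f ξ := by
    intro ξ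
    by_cases hne : ξ (siteA y) = ξ (siteB y)
    · simp [f, hne]
    · simp only [f, swapBond_apply_siteA, swapBond_apply_siteB,
        statMeas_mul_lam_rpow_height_swapBond hlam hne]
      ring
  have hsum := Equiv.sum_comp (swapBond_involutive y).toPerm f
  simp only [Function.Involutive.coe_toPerm, hodd, Finset.sum_neg_distrib] at hsum
  linarith

lemma isBVP_heightMoment (hp₀ : 0 < p) (hp₁ : p < 1) (hk : k ≤ N) :
    IsBVP N k p (heightMoment N k p) := by
  have hlam := lam_pos hp₀ hp₁
  refine ⟨?_, ?_, fun x hx₁ hx₂ => ?_⟩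
  · simp [heightMoment, height_zero, sum_statMeas hlam hk]
  · rw [heightMoment, ← mul_one (lam p ^ _), ← sum_statMeas hlam hk, Finset.mul_sum]
    refine Finset.sum_congr rfl fun ξ _ => ?_
    by_cases hξ : numParticles ξ = k
    · rw [height_last, hξ]
      push_cast
      ring
    · simp [statMeas, hξ]
  · obtain ⟨y, rfl⟩ : ∃ y : Fin (N - 1), x = y + 1 :=
      ⟨⟨x - 1, by omega⟩, by simp only; omega⟩
    calc Real.sqrt (p * (1 - p)) * (heightMoment N k p (y + 1 + 1) +
          heightMoment N k p (y + 1 - 1) - 2 * heightMoment N k p (y + 1))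
        = ∑ ξ : Conf N, statMeas N k p ξ * (Real.sqrt (p * (1 - p)) *
            (lam p ^ ((height ξ (y + 1 + 1) : ℝ) / 2) + lam p ^ ((height ξ y : ℝ) / 2) -
              2 * lam p ^ ((height ξ (y + 1) : ℝ) / 2))) := by
          simp only [heightMoment, Nat.add_sub_cancel, Finset.mul_sum, ← Finset.sum_add_distrib,
            ← Finset.sum_sub_distrib]
          exact Finset.sum_congr rfl fun ξ _ => by ring
      _ = rho p * heightMoment N k p (y + 1) + bias p * ∑ ξ : Conf N, statMeas N k p ξ *
            lam p ^ ((height ξ (y + 1) : ℝ) / 2) *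
              ((if ξ (siteB y) then 1 else 0) - if ξ (siteA y) then 1 else 0) := by
          simp only [sqrt_mul_laplacian_lam_rpow_height hp₀ hp₁, heightMoment, Finset.mul_sum,
            ← Finset.sum_add_distrib]
          exact Finset.sum_congr rfl fun ξ _ => by ring
      _ = rho p * heightMoment N k p (y + 1) := by
          rw [sum_statMeas_mul_lam_rpow_height_mul_current hlam, mul_zero, add_zero]

lemma IsBVP.unique (hp₀ : 0 < p) (hp₁ : p < 1) {a b : ℕ → ℝ} (ha : IsBVP N k p a)
    (hb : IsBVP N k p b) : ∀ x ≤ N, a x = b x := by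
  obtain ⟨ha₀, haN, ha⟩ := ha
  obtain ⟨hb₀, hbN, hb⟩ := hb
  have hd := eq_zero_of_laplacian_eq (N := N) (s := Real.sqrt (p * (1 - p))) (r := rho p)
    (d := fun x => a x - b x) (Real.sqrt_pos.2 (by nlinarith)) (sq_nonneg _)
    (by simp [ha₀, hb₀]) (by simp [haN, hbN])
    fun x hx₁ hx₂ => by linear_combination ha x hx₁ hx₂ - hb x hx₁ hx₂
  exact fun x hx => sub_eq_zero.1 (hd x hx)

end

theorem bvp_is_equilibrium_moment_general
    (N k : ℕ) (p : ℝ) (hk : 1 ≤ k ∧ k < N)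
    (hp : p ∈ Set.Ioo (1 / 2 : ℝ) 1)
    (a : ℕ → ℝ) (ha : IsBVP N k p a) (x : ℕ) (hx : x ≤ N) :
    a x = ∑ ξ : Conf N, statMeas N k p ξ * lam p ^ ((height ξ x : ℝ) / 2) := by
  have hp₀ : 0 < p := by linarith [hp.1]
  exact ha.unique hp₀ hp.2 (isBVP_heightMoment hp₀ hp.2 hk.2.le) x hx

/-- The solution `a_{N,k}` of the boundary value problem equals the equilibrium
exponential moment of the height function: `a_{N,k}(x) = E_{π_{N,k}}[λ^{h(ξ)(x)/2}]`. -/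
theorem bvp_is_equilibrium_moment
    (N k : ℕ) (p : ℝ) (hN : 2 ≤ N) (hk : 1 ≤ k ∧ k < N)
    (hp : p ∈ Set.Ioo (1 / 2 : ℝ) 1)
    (a : ℕ → ℝ) (ha : IsBVP N k p a) (x : ℕ) (hx : x ≤ N) :
    a x = ∑ ξ : Conf N, statMeas N k p ξ * lam p ^ ((height ξ x : ℝ) / 2) :=
  bvp_is_equilibrium_moment_general N k p hk hp a ha x hx

end Wasep
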